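/- For every subspace A of a q-matroid, cl(cyc(A)) ∩ A = cyc(A) and cyc(cl(A)) + A = cl(A). -/

import Mathlib

open Module Submodule

variable {K E : Type*} [Field K] [Fintype K] [AddCommGroup E] [Module K E]
  [FiniteDimensional K E]

/-- The dimension of a subspace, as an integer. -/
noncomputable def dimz {K E : Type*} [Field K] [AddCommGroup E] [Module K E]
    (A : Submodule K E) : ℤ :=
  (Module.finrank K ↥A : ℤ)

/-- `r` is the rank function of a `q`-matroid on `E`: axioms (R1)-(R3). -/
def QMat {K E : Type*} [Field K] [AddCommGroup E] [Module K E]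
    (r : Submodule K E → ℤ) : Prop :=
  (∀ A : Submodule K E, 0 ≤ r A ∧ r A ≤ dimz A) ∧
  (∀ A B : Submodule K E, A ≤ B → r A ≤ r B) ∧
  (∀ A B : Submodule K E, r (A ⊔ B) + r (A ⊓ B) ≤ r A + r B)

/-- A subspace is cyclic: every codimension-1 subspace has the same rank. -/
def QCyclic {K E : Type*} [Field K] [AddCommGroup E] [Module K E]
    (r : Submodule K E → ℤ) (A : Submodule K E) : Prop :=
  ∀ B ≤ A, Module.finrank K ↥A = Module.finrank K ↥B + 1 → r B = r A

/-- The cyclic operator: sum of all one-dimensional `x ≤ A` with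
`r (B ⊔ x) = r B` for all codimension-1 subspaces `B` of `A`. -/
noncomputable def qcyc {K E : Type*} [Field K] [AddCommGroup E] [Module K E]
    (r : Submodule K E → ℤ) (A : Submodule K E) : Submodule K E :=
  sSup {x : Submodule K E | x ≤ A ∧ Module.finrank K ↥x = 1 ∧
    ∀ B ≤ A, Module.finrank K ↥A = Module.finrank K ↥B + 1 → r (B ⊔ x) = r B}

/-- The closure operator: sum of all one-dimensional `x` with `r (A ⊔ x) = r A`. -/
noncomputable def qcl {K E : Type*} [Field K] [AddCommGroup E] [Module K E]
    (r : Submodule K E → ℤ) (A : Submodule K E) : Submodule K E :=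
  sSup {x : Submodule K E | Module.finrank K ↥x = 1 ∧ r (A ⊔ x) = r A}

/-- A subspace `F` is a flat: adding any one-dimensional space outside `F`
increases the rank. -/
def QFlat {K E : Type*} [Field K] [AddCommGroup E] [Module K E]
    (r : Submodule K E → ℤ) (F : Submodule K E) : Prop :=
  ∀ x : Submodule K E, Module.finrank K ↥x = 1 → ¬ x ≤ F → r F < r (F ⊔ x)

/-
The subspaces `X` with `r (A ⊔ X) = r A` are closed under `⊔` by submodularity, so `cl A` is the
largest of them. Hence `cl` is monotone, and a hyperplane `B` of `A` with `r B < r A` satisfies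
`cl B ⊓ A = B`; as `cyc A` is the intersection of `A` with these hyperplanes, this gives
`cl (cyc A) ⊓ A ≤ cyc A`. For the second identity, the nullity `dim X - r X` is monotone and
supermodular, so intersecting `F` with its rank-dropping hyperplanes does not lower it: `cyc F`,
and every subspace between `cyc F` and `F`, has the nullity of `F`. If `A ≤ F` and `r A = r F`,
then `cyc F ⊔ A` has both the rank and the nullity of `F`, so it is `F`.
-/

section

variable {K E : Type*} [Field K] [AddCommGroup E] [Module K E] {r : Submodule K E → ℤ}

theorem Submodule.le_sSup_of_forall_finrank_eq_one {X : Submodule K E} {S : Set (Submodule K E)}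
    (h : ∀ x : Submodule K E, finrank K x = 1 → x ≤ X → x ∈ S) : X ≤ sSup S := by
  intro v hv
  rcases eq_or_ne v 0 with rfl | hv0
  · exact zero_mem _
  refine le_sSup (h _ (finrank_span_singleton hv0) ?_) (mem_span_singleton_self v)
  exact span_le.mpr (Set.singleton_subset_iff.mpr hv)

theorem QMat.rank_nonneg (hM : QMat r) (X : Submodule K E) : 0 ≤ r X := (hM.1 X).1

theorem QMat.rank_le_dimz (hM : QMat r) (X : Submodule K E) : r X ≤ dimz X := (hM.1 X).2

theorem QMat.rank_mono (hM : QMat r) {X Y : Submodule K E} (h : X ≤ Y) : r X ≤ r Y :=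
  hM.2.1 X Y h

theorem QMat.rank_sup_add_rank_inf_le (hM : QMat r) (X Y : Submodule K E) :
    r (X ⊔ Y) + r (X ⊓ Y) ≤ r X + r Y :=
  hM.2.2 X Y

theorem QMat.rank_sup_eq_of_le (hM : QMat r) {A B X : Submodule K E} (hAB : A ≤ B)
    (h : r (A ⊔ X) = r A) : r (B ⊔ X) = r B := by
  have hsub := hM.rank_sup_add_rank_inf_le B (A ⊔ X)
  rw [← sup_assoc, sup_eq_left.mpr hAB] at hsub
  have h₁ := hM.rank_mono (le_inf hAB (le_sup_left : A ≤ A ⊔ X))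
  have h₂ := hM.rank_mono (le_sup_left : B ≤ B ⊔ X)
  omega

theorem qcyc_le (X : Submodule K E) : qcyc r X ≤ X :=
  sSup_le fun _ hx => hx.1

def rankDropHyperplanes (r : Submodule K E → ℤ) (X : Submodule K E) : Set (Submodule K E) :=
  {B | B ≤ X ∧ finrank K X = finrank K B + 1 ∧ r B < r X}

noncomputable def nullity (r : Submodule K E → ℤ) (X : Submodule K E) : ℤ := dimz X - r X

theorem nullity_le_nullity_of_mem_rankDropHyperplanes {B X : Submodule K E}
    (hB : B ∈ rankDropHyperplanes r X) : nullity r X ≤ nullity r B := by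
  obtain ⟨-, hd, hr⟩ := hB
  unfold nullity dimz
  omega

variable [FiniteDimensional K E]

theorem Submodule.eq_or_eq_of_finrank_eq_add_one {B C X : Submodule K E}
    (hBC : B ≤ C) (hCX : C ≤ X) (h : finrank K X = finrank K B + 1) : C = B ∨ C = X := by
  have h₁ := finrank_mono hBC
  have h₂ := finrank_mono hCX
  rcases (show finrank K C = finrank K B ∨ finrank K C = finrank K X by omega) with hC | hC
  · exact .inl (eq_of_le_of_finrank_eq hBC hC.symm).symm
  · exact .inr (eq_of_le_of_finrank_eq hCX hC)

theorem Submodule.sup_eq_of_finrank_eq_add_one {B X x : Submodule K E}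
    (hBX : B ≤ X) (h : finrank K X = finrank K B + 1) (hxX : x ≤ X) (hxB : ¬ x ≤ B) :
    B ⊔ x = X :=
  (eq_or_eq_of_finrank_eq_add_one le_sup_left (sup_le hBX hxX) h).resolve_left
    fun hB => hxB (hB ▸ le_sup_right)

theorem QMat.qcyc_eq (hM : QMat r) (X : Submodule K E) :
    qcyc r X = X ⊓ sInf (rankDropHyperplanes r X) := by
  apply le_antisymm
  · refine sSup_le fun x ⟨hxX, hx1, hx⟩ => le_inf hxX (le_sInf fun B ⟨hBX, hd, hB⟩ => ?_)
    by_contra hxB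
    have hrB := hx B hBX hd
    rw [sup_eq_of_finrank_eq_add_one hBX hd hxX hxB] at hrB
    omega
  · refine le_sSup_of_forall_finrank_eq_one fun x hx1 hxX => ⟨hxX.trans inf_le_left, hx1, ?_⟩
    intro B hBX hd
    by_cases hxB : x ≤ B
    · rw [sup_eq_left.mpr hxB]
    · have hnot : B ∉ rankDropHyperplanes r X := fun hB =>
        hxB (hxX.trans (inf_le_right.trans (sInf_le hB)))
      simp only [rankDropHyperplanes, Set.mem_ofPred_eq, not_and, not_lt] at hnot
      rw [sup_eq_of_finrank_eq_add_one hBX hd (hxX.trans inf_le_left) hxB]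
      exact le_antisymm (hnot hBX hd) (hM.rank_mono hBX)

theorem QMat.nullity_mono (hM : QMat r) {X Y : Submodule K E} (h : X ≤ Y) :
    nullity r X ≤ nullity r Y := by
  obtain ⟨C, hC⟩ := X.exists_isCompl
  have hsup : X ⊔ C ⊓ Y = Y := by rw [← sup_inf_assoc_of_le C h, hC.sup_eq_top, top_inf_eq]
  have hinf : X ⊓ (C ⊓ Y) = ⊥ := by rw [← inf_assoc, hC.inf_eq_bot, bot_inf_eq]
  have hdim := finrank_sup_add_finrank_inf_eq X (C ⊓ Y)
  have hsub := hM.rank_sup_add_rank_inf_le X (C ⊓ Y)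
  rw [hsup, hinf, finrank_bot] at hdim
  rw [hsup, hinf] at hsub
  have h₀ := hM.rank_nonneg ⊥
  have hCY := hM.rank_le_dimz (C ⊓ Y)
  unfold nullity dimz at hCY ⊢
  omega

theorem QMat.nullity_add_nullity_le (hM : QMat r) (X Y : Submodule K E) :
    nullity r X + nullity r Y ≤ nullity r (X ⊔ Y) + nullity r (X ⊓ Y) := by
  have hdim := finrank_sup_add_finrank_inf_eq X Y
  have hsub := hM.rank_sup_add_rank_inf_le X Y
  unfold nullity dimz
  omega

variable [Finite K]

instance : Finite (Submodule K E) :=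
  have := Module.finite_of_finite K (M := E)
  Finite.of_injective _ SetLike.coe_injective

theorem QMat.rank_sup_qcl (hM : QMat r) (A : Submodule K E) : r (A ⊔ qcl r A) = r A := by
  have hclosed : SupClosed {X : Submodule K E | r (A ⊔ X) = r A} := by
    intro X hX Y hY
    simp only [Set.mem_ofPred_eq] at hX hY ⊢
    rw [← sup_assoc, hM.rank_sup_eq_of_le le_sup_left hY, hX]
  exact hclosed.sSup_mem (Set.toFinite _) (by simp) fun x hx => hx.2

theorem QMat.le_qcl_iff (hM : QMat r) {A X : Submodule K E} :
    X ≤ qcl r A ↔ r (A ⊔ X) = r A := by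
  constructor
  · intro hX
    have h₁ := hM.rank_mono (le_sup_left : A ≤ A ⊔ X)
    have h₂ := hM.rank_mono (sup_le_sup_left hX A)
    rw [hM.rank_sup_qcl] at h₂
    omega
  · intro hX
    refine le_sSup_of_forall_finrank_eq_one fun x hx1 hxX => ⟨hx1, ?_⟩
    have h₁ := hM.rank_mono (le_sup_left : A ≤ A ⊔ x)
    have h₂ := hM.rank_mono (sup_le_sup_left hxX A)
    omega

theorem QMat.le_qcl (hM : QMat r) (A : Submodule K E) : A ≤ qcl r A :=
  hM.le_qcl_iff.mpr (by rw [sup_idem])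

theorem QMat.rank_qcl (hM : QMat r) (A : Submodule K E) : r (qcl r A) = r A := by
  simpa only [sup_eq_right.mpr (hM.le_qcl A)] using hM.rank_sup_qcl A

theorem QMat.qcl_mono (hM : QMat r) {A B : Submodule K E} (h : A ≤ B) :
    qcl r A ≤ qcl r B :=
  hM.le_qcl_iff.mpr (hM.rank_sup_eq_of_le h (hM.le_qcl_iff.mp le_rfl))

theorem QMat.qcl_inf_eq_of_mem_rankDropHyperplanes (hM : QMat r) {B X : Submodule K E}
    (hB : B ∈ rankDropHyperplanes r X) : qcl r B ⊓ X = B := by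
  obtain ⟨hBX, hd, hr⟩ := hB
  refine (eq_or_eq_of_finrank_eq_add_one (le_inf (hM.le_qcl B) hBX) inf_le_right hd).resolve_right
    fun hX => ?_
  have hrX := hM.le_qcl_iff.mp (inf_eq_right.mp hX)
  rw [sup_eq_right.mpr hBX] at hrX
  omega

theorem QMat.qcl_qcyc_inf (hM : QMat r) (A : Submodule K E) :
    qcl r (qcyc r A) ⊓ A = qcyc r A := by
  refine le_antisymm ?_ (le_inf (hM.le_qcl _) (qcyc_le A))
  rw [hM.qcyc_eq A]
  refine le_inf inf_le_right (le_sInf fun B hB => ?_)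
  calc qcl r (A ⊓ sInf (rankDropHyperplanes r A)) ⊓ A ≤ qcl r B ⊓ A :=
        inf_le_inf_right A (hM.qcl_mono (inf_le_right.trans (sInf_le hB)))
    _ = B := hM.qcl_inf_eq_of_mem_rankDropHyperplanes hB

theorem QMat.nullity_le_nullity_qcyc (hM : QMat r) (F : Submodule K E) :
    nullity r F ≤ nullity r (qcyc r F) := by
  have hclosed : InfClosed {X | X ≤ F ∧ nullity r F ≤ nullity r X} := by
    rintro X ⟨hXF, hX⟩ Y ⟨hYF, hY⟩
    refine ⟨inf_le_left.trans hXF, ?_⟩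
    have h₁ := hM.nullity_add_nullity_le X Y
    have h₂ := hM.nullity_mono (sup_le hXF hYF)
    omega
  rw [hM.qcyc_eq, ← sInf_insert]
  refine (hclosed.sInf_mem_of_nonempty (Set.toFinite _) (Set.insert_nonempty _ _) ?_).2
  rintro X (rfl | hX)
  · exact ⟨le_rfl, le_rfl⟩
  · exact ⟨hX.1, nullity_le_nullity_of_mem_rankDropHyperplanes hX⟩

theorem QMat.qcyc_sup_eq_of_rank_eq (hM : QMat r) {A F : Submodule K E} (hAF : A ≤ F)
    (hr : r A = r F) : qcyc r F ⊔ A = F := by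
  have hF : qcyc r F ⊔ A ≤ F := sup_le (qcyc_le F) hAF
  have h₁ := hM.nullity_le_nullity_qcyc F
  have h₂ := hM.nullity_mono (le_sup_left : qcyc r F ≤ qcyc r F ⊔ A)
  have h₃ := hM.nullity_mono hF
  have h₄ := hM.rank_mono (le_sup_right : A ≤ qcyc r F ⊔ A)
  have h₅ := hM.rank_mono hF
  refine eq_of_le_of_finrank_eq hF ?_
  unfold nullity dimz at h₁ h₂ h₃
  omega

end

/-- `cl(cyc(A)) ∩ A = cyc(A)` and `cyc(cl(A)) + A = cl(A)`. -/
theorem qcl_qcyc_interaction (r : Submodule K E → ℤ) (hM : QMat r)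
    (A : Submodule K E) :
    qcl r (qcyc r A) ⊓ A = qcyc r A ∧ qcyc r (qcl r A) ⊔ A = qcl r A :=
  ⟨hM.qcl_qcyc_inf A, hM.qcyc_sup_eq_of_rank_eq (hM.le_qcl A) (hM.rank_qcl A).symm⟩
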